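/- Under the stated assumptions, the set N^-(λ_c) is weakly bounded away from zero: there is no sequence (u_n) ⊂ N^-(λ_c) with u_n ⇀ 0 weakly in X. -/

import Mathlib

open Metric Set Filter Topology

/-- `H(u) = I₁'(u)u − α I₁(u)`. -/
noncomputable def Hfun {X : Type*} [NormedAddCommGroup X] [NormedSpace ℝ X]
    (I1 : X → ℝ) (α : ℝ) (u : X) : ℝ :=
  fderiv ℝ I1 u u - α * I1 u

/-- `h₀ = inf_{u ≠ 0} sup_{t > 0} H(t u)`. -/
noncomputable def groundLevelH {X : Type*} [NormedAddCommGroup X] [NormedSpace ℝ X]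
    (I1 : X → ℝ) (α : ℝ) : ℝ :=
  sInf ((fun u : X => sSup ((fun t : ℝ => Hfun I1 α (t • u)) '' Set.Ioi (0 : ℝ))) ''
    {u : X | u ≠ 0})

/-- `λ_c(u) = (I₁(u) − c) / I₂(u)`. -/
noncomputable def lamFun {X : Type*} [NormedAddCommGroup X] [NormedSpace ℝ X]
    (I1 I2 : X → ℝ) (c : ℝ) (u : X) : ℝ :=
  (I1 u - c) / I2 u

/-- The Nehari set `N(λ_c) = {u ≠ 0 : H(u) + α c = 0}`. -/
noncomputable def nehariSet {X : Type*} [NormedAddCommGroup X] [NormedSpace ℝ X]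
    (I1 : X → ℝ) (α c : ℝ) : Set X :=
  {u : X | u ≠ 0 ∧ Hfun I1 α u + α * c = 0}

/-!
Write `u_n = t_n v_n ∈ N⁻(λ_c)` with `‖v_n‖ = 1` and let `x_n = s(v_n) v_n` be the maximum point of
`H` on the ray through `v_n`. Both critical points of the fibering map lie on the Nehari level
`H = −αc`, so by (F1) the point `N⁻` lies beyond the maximum: `s(v_n) < t_n`, hence `x_n ⇀ 0` too.
Split `H = P + Q` with `P = J'(u)u − αJ` and `Q = αK − K'(u)u`. The homogeneous structure of `J`
makes `P` nondecreasing along rays, so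
`h₀ ≤ H(x_n) = P(x_n) + Q(x_n) ≤ P(u_n) + Q(x_n) = −αc + Q(x_n) − Q(u_n)`.
Complete continuity of `K'` sends `Q` to `αK(0)` along any weakly null sequence, so in the limit
`h₀ ≤ −αc`, contradicting `−αc < h₀`.
-/

noncomputable def Pfun {X : Type*} [NormedAddCommGroup X] [NormedSpace ℝ X]
    (J : X → ℝ) (α : ℝ) (u : X) : ℝ :=
  fderiv ℝ J u u - α * J u

noncomputable def Qfun {X : Type*} [NormedAddCommGroup X] [NormedSpace ℝ X]
    (K : X → ℝ) (α : ℝ) (u : X) : ℝ :=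
  α * K u - fderiv ℝ K u u

def WeaklyNull (𝕜 : Type*) {E : Type*} [RCLike 𝕜] [NormedAddCommGroup E] [NormedSpace 𝕜 E]
    (z : ℕ → E) : Prop :=
  ∀ f : E →L[𝕜] 𝕜, Tendsto (fun n => f (z n)) atTop (𝓝 0)

namespace WeaklyNull

variable {𝕜 E : Type*} [RCLike 𝕜] [NormedAddCommGroup E] [NormedSpace 𝕜 E] {z : ℕ → E}

/-- Banach–Steinhaus, applied to the `z n` viewed in the bidual. -/
theorem isBoundedUnder_norm (hz : WeaklyNull 𝕜 z) :
    IsBoundedUnder (· ≤ ·) atTop (norm ∘ z) := by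
  let ι := NormedSpace.inclusionInDoubleDual 𝕜 E
  have hpt : ∀ f : E →L[𝕜] 𝕜, ∃ C, ∀ n, ‖ι (z n) f‖ ≤ C := fun f => by
    obtain ⟨C, hC⟩ := (hz f).norm.bddAbove_range
    exact ⟨C, fun n => hC ⟨n, rfl⟩⟩
  obtain ⟨C, hC⟩ := banach_steinhaus hpt
  have hC0 : 0 ≤ C := (norm_nonneg _).trans (hC 0)
  refine isBoundedUnder_of ⟨C, fun n => NormedSpace.norm_le_dual_bound 𝕜 (z n) hC0 fun f => ?_⟩
  calc ‖f (z n)‖ = ‖ι (z n) f‖ := rfl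
    _ ≤ ‖ι (z n)‖ * ‖f‖ := (ι (z n)).le_opNorm f
    _ ≤ C * ‖f‖ := by gcongr; exact hC n

theorem smul (hz : WeaklyNull 𝕜 z) {c : ℕ → 𝕜} (hc : ∀ n, ‖c n‖ ≤ 1) :
    WeaklyNull 𝕜 (fun n => c n • z n) := fun f => by
  simpa only [map_smul, smul_eq_mul] using
    (isBoundedUnder_of ⟨1, hc⟩).smul_tendsto_zero (hz f)

theorem tendsto_apply_of_tendsto (hz : WeaklyNull 𝕜 z) {T : ℕ → E →L[𝕜] 𝕜} {T₀ : E →L[𝕜] 𝕜}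
    (hT : Tendsto T atTop (𝓝 T₀)) : Tendsto (fun n => T n (z n)) atTop (𝓝 0) := by
  have hdiff : Tendsto (fun n => (T n - T₀) (z n)) atTop (𝓝 0) :=
    (tendsto_sub_nhds_zero_iff.mpr hT).op_zero_isBoundedUnder_le hz.isBoundedUnder_norm
      (fun S x => S x) fun S x => S.le_opNorm x
  simpa using hdiff.add (hz T₀)

end WeaklyNull

theorem WeaklyNull.smul_of_le {E : Type*} [NormedAddCommGroup E] [NormedSpace ℝ E]
    {s t : ℕ → ℝ} {v : ℕ → E} (h : WeaklyNull ℝ (fun n => t n • v n)) (hs : ∀ n, 0 ≤ s n)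
    (hst : ∀ n, s n ≤ t n) : WeaklyNull ℝ (fun n => s n • v n) := by
  have hdiv : ∀ n, ‖s n / t n‖ ≤ 1 := fun n => by
    rw [Real.norm_of_nonneg (div_nonneg (hs n) ((hs n).trans (hst n)))]
    exact div_le_one_of_le₀ (hst n) ((hs n).trans (hst n))
  have hst0 : ∀ n, t n = 0 → s n = 0 := fun n ht => le_antisymm (ht ▸ hst n) (hs n)
  simpa only [smul_smul, div_mul_cancel_of_imp (hst0 _)] using h.smul hdiv

section Rays

variable {X : Type*} [NormedAddCommGroup X] [NormedSpace ℝ X]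

theorem HasFDerivAt.hasDerivAt_comp_smul {g : X → ℝ} {g' : X →L[ℝ] ℝ} {v : X} {t₀ : ℝ}
    (hg : HasFDerivAt g g' (t₀ • v)) : HasDerivAt (fun t : ℝ => g (t • v)) (g' v) t₀ :=
  hg.comp_hasDerivAt t₀ (by simpa using (hasDerivAt_id t₀).smul_const v)

theorem hasDerivAt_comp_smul_of_homogeneous {g : X → ℝ} {a : ℝ} {v : X}
    (hg : ∀ t : ℝ, 0 < t → g (t • v) = t ^ a * g v) {t₀ : ℝ} (ht₀ : 0 < t₀) :
    HasDerivAt (fun t : ℝ => g (t • v)) (a * t₀ ^ (a - 1) * g v) t₀ := by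
  refine ((Real.hasDerivAt_rpow_const (Or.inl ht₀.ne')).mul_const (g v)).congr_of_eventuallyEq ?_
  filter_upwards [eventually_gt_nhds ht₀] with t ht using hg t ht

theorem exists_mem_Ioo_fderiv_apply_eq {K : X → ℝ} (hK : Differentiable ℝ K) (z : X) :
    ∃ θ ∈ Ioo (0 : ℝ) 1, fderiv ℝ K (θ • z) z = K z - K 0 := by
  obtain ⟨θ, hθ, h⟩ := exists_hasDerivAt_eq_slope (fun t : ℝ => K (t • z))
    (fun t => fderiv ℝ K (t • z) z) zero_lt_one
    (hK.continuous.comp (continuous_id.smul continuous_const)).continuousOn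
    fun t _ => (hK _).hasFDerivAt.hasDerivAt_comp_smul
  exact ⟨θ, hθ, by simpa using h⟩

end Rays

section Fibers

variable {f : ℝ → ℝ} {s : ℝ}

theorem isGreatest_image_Ioi (hs : 0 < s) (hinc : MonotoneOn f (Ioc 0 s))
    (hdec : AntitoneOn f (Ici s)) : IsGreatest (f '' Ioi 0) (f s) := by
  refine ⟨⟨s, hs, rfl⟩, ?_⟩
  rintro _ ⟨t, ht, rfl⟩
  rcases le_total t s with h | h
  · exact hinc ⟨ht, h⟩ ⟨hs, le_rfl⟩ h
  · exact hdec self_mem_Ici h h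

theorem lt_of_strictMonoOn_Ioc_of_eq (hinc : StrictMonoOn f (Ioc 0 s)) {a b : ℝ} (ha : 0 < a)
    (hab : a < b) (heq : f a = f b) : s < b := by
  by_contra! hbs
  exact (hinc ⟨ha, hab.le.trans hbs⟩ ⟨ha.trans hab, hbs⟩ hab).ne heq

theorem nonneg_of_isGreatest_image_Ioi (hf : Tendsto f (𝓝[>] 0) (𝓝 0)) {m : ℝ}
    (hm : IsGreatest (f '' Ioi 0) m) : 0 ≤ m :=
  le_of_tendsto hf (eventually_nhdsWithin_of_forall fun t ht => hm.2 ⟨t, ht, rfl⟩)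

end Fibers

section Functionals

variable {X : Type*} [NormedAddCommGroup X] [NormedSpace ℝ X]

theorem hasDerivAt_lamFun_comp_smul {I1 I2 : X → ℝ} {α c : ℝ} {v : X} {t₀ : ℝ}
    (hI1 : DifferentiableAt ℝ I1 (t₀ • v))
    (hI2hom : ∀ t : ℝ, 0 < t → ∀ u : X, I2 (t • u) = t ^ α * I2 u) (hv : 0 < I2 v)
    (ht₀ : 0 < t₀) :
    HasDerivAt (fun t : ℝ => lamFun I1 I2 c (t • v))
      ((Hfun I1 α (t₀ • v) + α * c) / (t₀ * I2 (t₀ • v))) t₀ := by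
  have hnum := hI1.hasFDerivAt.hasDerivAt_comp_smul.sub_const c
  have hden := hasDerivAt_comp_smul_of_homogeneous (fun t ht => hI2hom t ht v) ht₀
  have hpow : t₀ ^ α = t₀ ^ (α - 1) * t₀ := by
    rw [← Real.rpow_add_one ht₀.ne', sub_add_cancel]
  refine (hnum.div hden (by rw [hI2hom t₀ ht₀]; positivity)).congr_deriv ?_
  rw [hI2hom t₀ ht₀, hpow]
  simp only [Hfun, map_smul, smul_eq_mul]
  field_simp
  ring

theorem Hfun_smul_eq_of_deriv_lamFun_eq_zero {I1 I2 : X → ℝ} {α c : ℝ} {v : X} {t₀ : ℝ}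
    (hI1 : DifferentiableAt ℝ I1 (t₀ • v))
    (hI2hom : ∀ t : ℝ, 0 < t → ∀ u : X, I2 (t • u) = t ^ α * I2 u) (hv : 0 < I2 v)
    (ht₀ : 0 < t₀) (hcrit : deriv (fun t : ℝ => lamFun I1 I2 c (t • v)) t₀ = 0) :
    Hfun I1 α (t₀ • v) = -(α * c) := by
  rw [(hasDerivAt_lamFun_comp_smul hI1 hI2hom hv ht₀).deriv, div_eq_zero_iff] at hcrit
  have hden : t₀ * I2 (t₀ • v) ≠ 0 := by rw [hI2hom t₀ ht₀]; positivity
  linarith [hcrit.resolve_right hden]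

/-- Both critical points lie on the Nehari level `H = −αc`. -/
theorem lt_of_deriv_lamFun_eq_zero {I1 I2 : X → ℝ} {α c : ℝ} {v : X} {s a b : ℝ}
    (hI1 : Differentiable ℝ I1)
    (hI2hom : ∀ t : ℝ, 0 < t → ∀ u : X, I2 (t • u) = t ^ α * I2 u) (hv : 0 < I2 v)
    (hinc : StrictMonoOn (fun t : ℝ => Hfun I1 α (t • v)) (Ioc 0 s)) (ha : 0 < a) (hab : a < b)
    (hcrit_a : deriv (fun t : ℝ => lamFun I1 I2 c (t • v)) a = 0)
    (hcrit_b : deriv (fun t : ℝ => lamFun I1 I2 c (t • v)) b = 0) : s < b :=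
  lt_of_strictMonoOn_Ioc_of_eq hinc ha hab <|
    (Hfun_smul_eq_of_deriv_lamFun_eq_zero (hI1 _) hI2hom hv ha hcrit_a).trans
      (Hfun_smul_eq_of_deriv_lamFun_eq_zero (hI1 _) hI2hom hv (ha.trans hab) hcrit_b).symm

theorem Hfun_eq_Pfun_add_Qfun {I1 J K : X → ℝ} (α : ℝ) (hI1 : ∀ u, I1 u = J u - K u) {u : X}
    (hJ : DifferentiableAt ℝ J u) (hK : DifferentiableAt ℝ K u) :
    Hfun I1 α u = Pfun J α u + Qfun K α u := by
  have hfd : fderiv ℝ I1 u = fderiv ℝ J u - fderiv ℝ K u := by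
    rw [show I1 = fun w => J w - K w from funext hI1]
    exact fderiv_sub hJ hK
  simp only [Hfun, Pfun, Qfun, hfd, sub_apply, hI1]
  ring

theorem continuous_Hfun {I1 : X → ℝ} (α : ℝ) (hI1 : ContDiff ℝ 1 I1) :
    Continuous (Hfun I1 α) :=
  ((hI1.continuous_fderiv one_ne_zero).clm_apply continuous_id).sub
    (continuous_const.mul hI1.continuous)

end Functionals

section Splitting

variable {X : Type*} [NormedAddCommGroup X] [NormedSpace ℝ X] {J A : X → ℝ} {α β β' : ℝ}

theorem Pfun_eq (hJ : Differentiable ℝ J) (hβ : β ≠ 0)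
    (hJdef : ∀ u : X, J u = ‖u‖ ^ β / β + A u)
    (hAhom : ∀ t : ℝ, 0 < t → ∀ u : X, A (t • u) = t ^ β' * A u) (u : X) :
    Pfun J α u = (1 - α / β) * ‖u‖ ^ β + (β' - α) * A u := by
  have hnorm : ∀ t : ℝ, 0 < t → ‖t • u‖ ^ β / β = t ^ β * (‖u‖ ^ β / β) := fun t ht => by
    rw [norm_smul, Real.norm_of_nonneg ht.le, Real.mul_rpow ht.le (norm_nonneg u), mul_div_assoc]
  have hsplit : HasDerivAt (fun t : ℝ => ‖t • u‖ ^ β / β + A (t • u))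
      (β * 1 ^ (β - 1) * (‖u‖ ^ β / β) + β' * 1 ^ (β' - 1) * A u) 1 :=
    (hasDerivAt_comp_smul_of_homogeneous (g := fun w => ‖w‖ ^ β / β) hnorm one_pos).add
      (hasDerivAt_comp_smul_of_homogeneous (fun t ht => hAhom t ht u) one_pos)
  have hJ' : HasDerivAt (fun t : ℝ => J (t • u)) (fderiv ℝ J u u) 1 := by
    simpa using (hJ (1 • u)).hasFDerivAt.hasDerivAt_comp_smul
  have heuler : fderiv ℝ J u u = ‖u‖ ^ β + β' * A u := by
    rw [hJ'.unique (by simpa only [hJdef] using hsplit), Real.one_rpow, Real.one_rpow]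
    field_simp
  rw [Pfun, heuler, hJdef]
  field_simp
  ring

theorem Pfun_smul_le_smul (hJ : Differentiable ℝ J) (hJdef : ∀ u : X, J u = ‖u‖ ^ β / β + A u)
    (hAhom : ∀ t : ℝ, 0 < t → ∀ u : X, A (t • u) = t ^ β' * A u) (hA0 : ∀ u, 0 ≤ A u)
    (hα : 0 < α) (hαβ : α ≤ β) (hαβ' : α ≤ β') {a b : ℝ} (ha : 0 < a) (hab : a ≤ b) (v : X) :
    Pfun J α (a • v) ≤ Pfun J α (b • v) := by
  have hβ : 0 < β := hα.trans_le hαβ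
  have hP : ∀ t : ℝ, 0 < t →
      Pfun J α (t • v) = (1 - α / β) * (t ^ β * ‖v‖ ^ β) + (β' - α) * (t ^ β' * A v) :=
    fun t ht => by
      rw [Pfun_eq hJ hβ.ne' hJdef hAhom, hAhom t ht, norm_smul, Real.norm_of_nonneg ht.le,
        Real.mul_rpow ht.le (norm_nonneg v)]
  have hcoef : 0 ≤ 1 - α / β := sub_nonneg.mpr ((div_le_one hβ).mpr hαβ)
  rw [hP a ha, hP b (ha.trans_le hab)]
  have hAv := hA0 v
  gcongr
  linarith

theorem tendsto_Qfun_of_weaklyNull {K : X → ℝ} (α : ℝ) (hK : Differentiable ℝ K)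
    (hKcc : ∀ (u : ℕ → X) (w : X),
      (∀ f : X →L[ℝ] ℝ, Tendsto (fun n => f (u n)) atTop (𝓝 (f w))) →
      Tendsto (fun n => fderiv ℝ K (u n)) atTop (𝓝 (fderiv ℝ K w)))
    {z : ℕ → X} (hz : WeaklyNull ℝ z) :
    Tendsto (fun n => Qfun K α (z n)) atTop (𝓝 (α * K 0)) := by
  have hK'0 : ∀ z : ℕ → X, WeaklyNull ℝ z →
      Tendsto (fun n => fderiv ℝ K (z n)) atTop (𝓝 (fderiv ℝ K 0)) :=
    fun z hz => hKcc z 0 fun f => by simpa using hz f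
  choose θ hθ hmvt using fun n => exists_mem_Ioo_fderiv_apply_eq hK (z n)
  have hθz : WeaklyNull ℝ (fun n => θ n • z n) :=
    hz.smul fun n => by rw [Real.norm_of_nonneg (hθ n).1.le]; exact (hθ n).2.le
  have hKz : Tendsto (fun n => K (z n)) atTop (𝓝 (K 0)) := by
    have := hz.tendsto_apply_of_tendsto (hK'0 _ hθz)
    simp only [hmvt] at this
    exact tendsto_sub_nhds_zero_iff.mp this
  simpa [Qfun] using (hKz.const_mul α).sub (hz.tendsto_apply_of_tendsto (hK'0 z hz))

end Splitting

theorem groundLevelH_le {X : Type*} [NormedAddCommGroup X] [NormedSpace ℝ X] {I1 : X → ℝ}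
    {α : ℝ} {s : X → ℝ} (hH : ContinuousAt (Hfun I1 α) 0) (hH0 : Hfun I1 α 0 = 0)
    (hmax : ∀ w : X, w ≠ 0 →
      IsGreatest ((fun t : ℝ => Hfun I1 α (t • w)) '' Ioi 0) (Hfun I1 α (s w • w)))
    {w : X} (hw : w ≠ 0) : groundLevelH I1 α ≤ Hfun I1 α (s w • w) := by
  have hray : ∀ w : X, Tendsto (fun t : ℝ => Hfun I1 α (t • w)) (𝓝[>] 0) (𝓝 0) := fun w => by
    have := hH.tendsto.comp ((continuous_id.smul continuous_const).tendsto' (0 : ℝ) (0 : X)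
      (zero_smul ℝ w))
    exact (hH0 ▸ this).mono_left nhdsWithin_le_nhds
  refine csInf_le ⟨0, ?_⟩ ⟨w, hw, (hmax w hw).csSup_eq⟩
  rintro _ ⟨w', hw', rfl⟩
  change 0 ≤ sSup _
  rw [(hmax w' hw').csSup_eq]
  exact nonneg_of_isGreatest_image_Ioi (hray w') (hmax w' hw')

theorem statement_11_general
    {X : Type*} [NormedAddCommGroup X] [NormedSpace ℝ X]
    (I1 I2 : X → ℝ) (α c : ℝ)
    (hI1C1 : ContDiff ℝ 1 I1)
    (hI10 : I1 0 = 0)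
    (hI2pos : ∀ u : X, u ≠ 0 → 0 < I2 u)
    (hα : 1 < α)
    (hI2hom : ∀ t : ℝ, 0 < t → ∀ u : X, I2 (t • u) = t ^ α * I2 u)
    -- (F1)
    (s : X → ℝ)
    (hF1pos : ∀ u : X, u ≠ 0 → 0 < s u)
    (hF1inc : ∀ u : X, u ≠ 0 →
      StrictMonoOn (fun t : ℝ => Hfun I1 α (t • u)) (Set.Ioc 0 (s u)))
    (hF1dec : ∀ u : X, u ≠ 0 →
      StrictAntiOn (fun t : ℝ => Hfun I1 α (t • u)) (Set.Ici (s u)))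
    -- `0 < −αc < h₀`
        -- (F2): I₁ = J − K
    (J K : X → ℝ) (β : ℝ)
    (hJC1 : ContDiff ℝ 1 J) (hKC1 : ContDiff ℝ 1 K)
    (hI1JK : ∀ u : X, I1 u = J u - K u)
    -- `K'` is completely continuous
    (hKcc : ∀ (u : ℕ → X) (w : X),
      (∀ f : X →L[ℝ] ℝ, Tendsto (fun n => f (u n)) atTop (nhds (f w))) →
      Tendsto (fun n => fderiv ℝ K (u n)) atTop (nhds (fderiv ℝ K w)))
    (hβα : α ≤ β)
    -- J(u) = ‖u‖^β/β + A(u) with A nonnegative, bounded on bounded sets, β'-homogeneous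
    (Afn : X → ℝ) (β' : ℝ)
    (hJdef : ∀ u : X, J u = ‖u‖ ^ β / β + Afn u)
    (hA0 : ∀ u : X, 0 ≤ Afn u)
    (hAhom : ∀ t : ℝ, 0 < t → ∀ u : X, Afn (t • u) = t ^ β' * Afn u)
    (hβ' : α ≤ β')
    -- the two critical points of the fibering maps of λ_c
    (tcp tcm : X → ℝ)
    (hcrit : ∀ u : X, u ≠ 0 →
      0 < tcp u ∧ tcp u < tcm u ∧
      IsLocalMin (fun t : ℝ => lamFun I1 I2 c (t • u)) (tcp u) ∧
      IsLocalMax (fun t : ℝ => lamFun I1 I2 c (t • u)) (tcm u) ∧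
      (∀ t : ℝ, 0 < t →
        (deriv (fun r : ℝ => lamFun I1 I2 c (r • u)) t = 0 ↔ t = tcp u ∨ t = tcm u)))
    (hch : -(α * c) < groundLevelH I1 α) :
    ¬ ∃ u : ℕ → X, (∀ n, u n ∈ (fun v : X => tcm v • v) '' sphere (0 : X) 1) ∧
      ∀ f : X →L[ℝ] ℝ, Tendsto (fun n => f (u n)) atTop (nhds 0) := by
  rintro ⟨u, hu, hwk⟩
  choose v hv huv using hu
  obtain rfl : u = fun n => tcm (v n) • v n := funext fun n => (huv n).symm
  have hv0 : ∀ n, v n ≠ 0 := fun n => ne_zero_of_mem_sphere one_ne_zero ⟨v n, hv n⟩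
  have hI1 := hI1C1.differentiable one_ne_zero
  have hJ := hJC1.differentiable one_ne_zero
  have hK := hKC1.differentiable one_ne_zero
  have hs_lt : ∀ n, s (v n) < tcm (v n) := fun n => by
    obtain ⟨hp, hpm, hmin, hmax, -⟩ := hcrit _ (hv0 n)
    exact lt_of_deriv_lamFun_eq_zero hI1 hI2hom (hI2pos _ (hv0 n)) (hF1inc _ (hv0 n)) hp hpm
      hmin.deriv_eq_zero hmax.deriv_eq_zero
  have hgap : ∀ n, groundLevelH I1 α + α * c ≤
      Qfun K α (s (v n) • v n) - Qfun K α (tcm (v n) • v n) := fun n => by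
    have hlevel := groundLevelH_le (continuous_Hfun α hI1C1).continuousAt
      (by simp [Hfun, hI10]) (fun w hw => isGreatest_image_Ioi (hF1pos w hw)
        (hF1inc w hw).monotoneOn (hF1dec w hw).antitoneOn) (hv0 n)
    have hH := Hfun_smul_eq_of_deriv_lamFun_eq_zero (hI1 _) hI2hom (hI2pos _ (hv0 n))
      ((hF1pos _ (hv0 n)).trans (hs_lt n)) (hcrit _ (hv0 n)).2.2.2.1.deriv_eq_zero
    have hP := Pfun_smul_le_smul hJ hJdef hAhom hA0 (by linarith) hβα hβ'
      (hF1pos _ (hv0 n)) (hs_lt n).le (v n)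
    rw [Hfun_eq_Pfun_add_Qfun α hI1JK (hJ _) (hK _)] at hlevel hH
    linarith
  have hx : WeaklyNull ℝ (fun n => s (v n) • v n) :=
    WeaklyNull.smul_of_le hwk (fun n => (hF1pos _ (hv0 n)).le) fun n => (hs_lt n).le
  have hlim := (tendsto_Qfun_of_weaklyNull α hK hKcc hx).sub
    (tendsto_Qfun_of_weaklyNull α hK hKcc hwk)
  rw [sub_self] at hlim
  linarith [ge_of_tendsto' hlim hgap]

/-- `N⁻(λ_c)` is weakly bounded away from zero: there is no sequence
in `N⁻(λ_c)` converging weakly to `0`. -/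
theorem statement_11
    {X : Type*} [NormedAddCommGroup X] [NormedSpace ℝ X] [CompleteSpace X]
    [UniformConvexSpace X]
    (hinf : ¬ FiniteDimensional ℝ X)
    (hnorm : ContDiffOn ℝ 1 (fun x : X => ‖x‖) {x : X | x ≠ 0})
    (I1 I2 : X → ℝ) (α c : ℝ)
    (hI1C1 : ContDiff ℝ 1 I1) (hI2C1 : ContDiff ℝ 1 I2)
    (hI10 : I1 0 = 0) (hI20 : I2 0 = 0)
    (hI2pos : ∀ u : X, u ≠ 0 → 0 < I2 u)
    (hα : 1 < α)
    (hI2hom : ∀ t : ℝ, 0 < t → ∀ u : X, I2 (t • u) = t ^ α * I2 u)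
    -- `I₂'` is completely continuous
    (hI2cc : ∀ (u : ℕ → X) (w : X),
      (∀ f : X →L[ℝ] ℝ, Tendsto (fun n => f (u n)) atTop (nhds (f w))) →
      Tendsto (fun n => fderiv ℝ I2 (u n)) atTop (nhds (fderiv ℝ I2 w)))
    -- (F1)
    (s : X → ℝ)
    (hF1pos : ∀ u : X, u ≠ 0 → 0 < s u)
    (hF1inc : ∀ u : X, u ≠ 0 →
      StrictMonoOn (fun t : ℝ => Hfun I1 α (t • u)) (Set.Ioc 0 (s u)))
    (hF1dec : ∀ u : X, u ≠ 0 →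
      StrictAntiOn (fun t : ℝ => Hfun I1 α (t • u)) (Set.Ici (s u)))
    (hF1unif : ∀ W : Set X, W ⊆ {u : X | u ≠ 0} → IsCompact (toWeakSpace ℝ X '' W) →
      ∀ M : ℝ, ∃ T : ℝ, ∀ t : ℝ, T ≤ t → ∀ u ∈ W, Hfun I1 α (t • u) < M)
    -- `0 < −αc < h₀`
        -- (F2): I₁ = J − K
    (J K : X → ℝ) (C1 C2 β ηe : ℝ)
    (hJC1 : ContDiff ℝ 1 J) (hKC1 : ContDiff ℝ 1 K)
    (hI1JK : ∀ u : X, I1 u = J u - K u)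
    -- `K'` is completely continuous
    (hKcc : ∀ (u : ℕ → X) (w : X),
      (∀ f : X →L[ℝ] ℝ, Tendsto (fun n => f (u n)) atTop (nhds (f w))) →
      Tendsto (fun n => fderiv ℝ K (u n)) atTop (nhds (fderiv ℝ K w)))
    (hC1 : 0 < C1) (hC2 : 0 < C2) (hβα : α ≤ β) (hηe : 1 < ηe)
    (hJlb : ∀ u : X, C1 * ‖u‖ ^ β ≤ J u)
    (hJmono : ∀ u v : X,
      C2 * ((‖u‖ ^ (ηe - 1) - ‖v‖ ^ (ηe - 1)) * (‖u‖ - ‖v‖)) ≤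
        (fderiv ℝ J u - fderiv ℝ J v) (u - v))
    -- J(u) = ‖u‖^β/β + A(u) with A nonnegative, bounded on bounded sets, β'-homogeneous
    (Afn : X → ℝ) (β' p C : ℝ)
    (hJdef : ∀ u : X, J u = ‖u‖ ^ β / β + Afn u)
    (hA0 : ∀ u : X, 0 ≤ Afn u)
    (hAbdd : ∀ R : ℝ, ∃ M : ℝ, ∀ u : X, ‖u‖ ≤ R → Afn u ≤ M)
    (hAhom : ∀ t : ℝ, 0 < t → ∀ u : X, Afn (t • u) = t ^ β' * Afn u)
    (hβ' : α ≤ β')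
    -- Q(u) = αK(u) − K'(u)u ≥ −C‖u‖^p with p > β
    (hp : β < p) (hC : 0 < C)
    (hQlb : ∀ u : X, -C * ‖u‖ ^ p ≤ α * K u - fderiv ℝ K u u)
    -- H ∈ C¹(X)
    (hHC1 : ContDiff ℝ 1 (Hfun I1 α))
    -- the two critical points of the fibering maps of λ_c
    (tcp tcm : X → ℝ)
    (hcrit : ∀ u : X, u ≠ 0 →
      0 < tcp u ∧ tcp u < tcm u ∧
      IsLocalMin (fun t : ℝ => lamFun I1 I2 c (t • u)) (tcp u) ∧
      IsLocalMax (fun t : ℝ => lamFun I1 I2 c (t • u)) (tcm u) ∧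
      (∀ t : ℝ, 0 < t →
        (deriv (fun r : ℝ => lamFun I1 I2 c (r • u)) t = 0 ↔ t = tcp u ∨ t = tcm u)))
    (hc0 : 0 < -(α * c)) (hch : -(α * c) < groundLevelH I1 α) :
    ¬ ∃ u : ℕ → X, (∀ n, u n ∈ (fun v : X => tcm v • v) '' sphere (0 : X) 1) ∧
      ∀ f : X →L[ℝ] ℝ, Tendsto (fun n => f (u n)) atTop (nhds 0) :=
  statement_11_general I1 I2 α c hI1C1 hI10 hI2pos hα hI2hom s hF1pos hF1inc hF1dec J K β hJC1 hKC1
    hI1JK hKcc hβα Afn β' hJdef hA0 hAhom hβ' tcp tcm hcrit hch
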